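/- arXiv:1512.04262 — 3 statements merged into one kernel-verified Lean document; each statement's English description precedes it below -/
import Mathlib

section
/- In the setting of a modular lattice L with a predimension function δ satisfying addition and submodularity, if a₁ and a₂ are both strong in b (i.e. δ(x/aᵢ) ≥ 0 for all aᵢ ≤ x ≤ b in the domain of δ), then a₁ ∧ a₂ is strong in b. -/
/-- An extension `a ≤ b` is strong for a predimension function `δ`
(`δ x y` denotes `δ(y/x)`) if `δ(x/a) ≥ 0` for all `a ≤ x ≤ b`. -/
def IsStrongExt {L : Type*} [Lattice L] (δ : L → L → ℤ) (a b : L) : Prop :=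
  a ≤ b ∧ ∀ x, a ≤ x → x ≤ b → 0 ≤ δ a x

/-- In a modular lattice with a predimension function `δ` satisfying the addition
formula and submodularity, if `a₁` and `a₂` are both strong in `b`, then so is
`a₁ ∧ a₂`. -/
theorem isStrongExt_inf {L : Type*} [Lattice L] [IsModularLattice L]
    (δ : L → L → ℤ)
    (hadd : ∀ x y z, x ≤ y → y ≤ z → δ x z = δ y z + δ x y)
    (hsub : ∀ x y, δ y (x ⊔ y) ≤ δ (x ⊓ y) x)
    {a₁ a₂ b : L} (h₁ : IsStrongExt δ a₁ b) (h₂ : IsStrongExt δ a₂ b) :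
    IsStrongExt δ (a₁ ⊓ a₂) b := by
  obtain ⟨hab₁, hs₁⟩ := h₁
  obtain ⟨hab₂, hs₂⟩ := h₂
  refine ⟨le_trans inf_le_left hab₁, fun x hax hxb => ?_⟩
  -- step 1: a₁ ⊓ a₂ is strong in a₁
  have key : ∀ y, a₁ ⊓ a₂ ≤ y → y ≤ a₁ → 0 ≤ δ (a₁ ⊓ a₂) y := by
    intro y hy hy1
    have hyinf : y ⊓ a₂ = a₁ ⊓ a₂ :=
      le_antisymm (le_inf (le_trans inf_le_left hy1) inf_le_right)
        (le_inf hy inf_le_right)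
    have h := hsub y a₂
    rw [hyinf] at h
    exact le_trans (hs₂ (y ⊔ a₂) le_sup_right
      (sup_le (le_trans hy1 hab₁) hab₂)) h
  -- step 2: compose with a₁ strong in b
  have h1 : a₁ ⊓ a₂ ≤ x ⊓ a₁ := le_inf hax inf_le_left
  have h2 : x ⊓ a₁ ≤ x := inf_le_left
  rw [hadd (a₁ ⊓ a₂) (x ⊓ a₁) x h1 h2]
  have hA : 0 ≤ δ (x ⊓ a₁) x :=
    le_trans (hs₁ (x ⊔ a₁) le_sup_right (sup_le hxb hab₁)) (hsub x a₁)
  have hB : 0 ≤ δ (a₁ ⊓ a₂) (x ⊓ a₁) := key _ h1 inf_le_right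
  omega
end

section
/- In the setting of a modular lattice L with a predimension function δ satisfying addition and submodularity, suppose (a_j)_{j ∈ J} is a family of elements each strong in b, and suppose that for every x ≥ ∧_j a_j with x ≤ b and [∧_j a_j, x] of finite length, the interval [∧_j a_j, x] has no infinite chains. Then a := ∧_{j∈J} a_j is strong in b. -/
/-- The interval `[a, x]` has no infinite chains. -/
def NoInfiniteChains {L : Type*} [Lattice L] (a x : L) : Prop :=
  ∀ C : Set L, (∀ y ∈ C, a ≤ y ∧ y ≤ x) → IsChain (· ≤ ·) C → C.Finite

/-- In a complete modular lattice with a predimension function `δ` satisfying the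
addition formula and submodularity, if each member of a family `(a_j)_{j ∈ J}` is
strong in `b` and all intervals `[⨅ a_j, x]` for `⨅ a_j ≤ x ≤ b` have no infinite
chains, then the meet `⨅ a_j` is strong in `b`. -/
theorem isStrongExt_iInf {L : Type*} [CompleteLattice L] [IsModularLattice L]
    (δ : L → L → ℤ)
    (hadd : ∀ x y z, x ≤ y → y ≤ z → δ x z = δ y z + δ x y)
    (hsub : ∀ x y, δ y (x ⊔ y) ≤ δ (x ⊓ y) x)
    {J : Type*} [Nonempty J] (a : J → L) {b : L}
    (hstrong : ∀ j, IsStrongExt δ (a j) b)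
    (hchain : ∀ x, (⨅ j, a j) ≤ x → x ≤ b → NoInfiniteChains (⨅ j, a j) x) :
    IsStrongExt δ (⨅ j, a j) b := by
  classical
  obtain ⟨j₀⟩ := ‹Nonempty J›
  have hAb : (⨅ j, a j) ≤ b := le_trans (iInf_le a j₀) (hstrong j₀).1
  -- key: if c is strong in b and z ≤ b then δ(z / c ⊓ z) ≥ 0
  have key : ∀ c, IsStrongExt δ c b → ∀ z, z ≤ b → 0 ≤ δ (c ⊓ z) z := by
    intro c hc z hz
    have h1 : δ c (z ⊔ c) ≤ δ (z ⊓ c) z := hsub z c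
    have h2 : 0 ≤ δ c (z ⊔ c) := hc.2 _ le_sup_right (sup_le hz hc.1)
    rw [inf_comm z c] at h1
    exact le_trans h2 h1
  -- meet of two strong elements is strong
  have meet2 : ∀ c d, IsStrongExt δ c b → IsStrongExt δ d b →
      IsStrongExt δ (c ⊓ d) b := by
    intro c d hc hd
    refine ⟨le_trans inf_le_left hc.1, fun x hx1 hx2 => ?_⟩
    have h1 : c ⊓ d ≤ x ⊓ c := le_inf hx1 inf_le_left
    have h2 : x ⊓ c ≤ x := inf_le_left
    have hadd' := hadd (c ⊓ d) (x ⊓ c) x h1 h2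
    have e : d ⊓ (x ⊓ c) = c ⊓ d :=
      le_antisymm (le_inf (le_trans inf_le_right inf_le_right) inf_le_left)
        (le_inf inf_le_right (le_inf hx1 inf_le_left))
    have t1 : 0 ≤ δ (x ⊓ c) x := by
      have := key c hc x hx2
      rwa [inf_comm c x] at this
    have t2 : 0 ≤ δ (c ⊓ d) (x ⊓ c) := by
      have := key d hd (x ⊓ c) (le_trans h2 hx2)
      rwa [e] at this
    omega
  -- finite meets of the family are strong
  have finStrong : ∀ S : Finset J, S.Nonempty → IsStrongExt δ (S.inf a) b := by
    intro S
    induction S using Finset.induction_on with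
    | empty => intro h; exact absurd h (by simp)
    | @insert j S hj ih =>
      intro _
      rcases S.eq_empty_or_nonempty with h | h
      · subst h; simpa using hstrong j
      · rw [Finset.inf_insert]
        exact meet2 _ _ (hstrong j) (ih h)
  refine ⟨hAb, fun x hAx hxb => ?_⟩
  set D : Set L := {y | ∃ S : Finset J, S.Nonempty ∧ y = S.inf a ⊓ x} with hD
  have hDlb : ∀ y ∈ D, (⨅ j, a j) ≤ y ∧ y ≤ x := by
    rintro y ⟨S, hS, rfl⟩
    exact ⟨le_inf (le_trans (le_iInf fun j => iInf_le a j)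
      (Finset.le_inf fun j _ => iInf_le a j)) hAx, inf_le_right⟩
  have hne : ({j₀} : Finset J).inf a ⊓ x ∈ D :=
    ⟨{j₀}, Finset.singleton_nonempty j₀, rfl⟩
  -- D has a minimal element
  have hmin : ∃ m ∈ D, ∀ d ∈ D, ¬ d < m := by
    by_contra hcon
    push_neg at hcon
    let g : {d // d ∈ D} → {d // d ∈ D} := fun d =>
      ⟨(hcon d.1 d.2).choose, (hcon d.1 d.2).choose_spec.1⟩
    have hg : ∀ d : {d // d ∈ D}, (g d : L) < d := fun d =>
      (hcon d.1 d.2).choose_spec.2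
    let f : ℕ → {d // d ∈ D} := fun n => g^[n] ⟨_, hne⟩
    have hf : ∀ n, (f (n + 1) : L) < f n := by
      intro n
      have hstep : f (n + 1) = g (f n) := Function.iterate_succ_apply' g n _
      rw [hstep]; exact hg (f n)
    have hanti : StrictAnti (fun n => (f n : L)) := strictAnti_nat_of_succ_lt hf
    have hinj : Function.Injective (fun n => (f n : L)) := hanti.injective
    have hC : IsChain (· ≤ ·) (Set.range fun n => (f n : L)) := by
      rintro _ ⟨m, rfl⟩ _ ⟨n, rfl⟩ hmn
      rcases le_total m n with h | h
      · exact Or.inr (hanti.antitone h)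
      · exact Or.inl (hanti.antitone h)
    have hfin := hchain x hAx hxb _ (by rintro _ ⟨n, rfl⟩; exact hDlb _ (f n).2) hC
    exact (Set.infinite_range_of_injective hinj) hfin
  obtain ⟨m, hmD, hmmin⟩ := hmin
  obtain ⟨S, hS, rfl⟩ := hmD
  -- the minimal element equals the infimum
  have hmA : S.inf a ⊓ x = ⨅ j, a j := by
    refine le_antisymm (le_iInf fun j => ?_) (hDlb _ ⟨S, hS, rfl⟩).1
    have hd : (insert j S).inf a ⊓ x ∈ D :=
      ⟨insert j S, Finset.insert_nonempty j S, rfl⟩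
    have hle : (insert j S).inf a ⊓ x ≤ S.inf a ⊓ x :=
      inf_le_inf_right x (Finset.inf_mono (Finset.subset_insert j S))
    have heq : (insert j S).inf a ⊓ x = S.inf a ⊓ x := by
      rcases lt_or_eq_of_le hle with h | h
      · exact absurd h (hmmin _ hd)
      · exact h
    calc S.inf a ⊓ x = (insert j S).inf a ⊓ x := heq.symm
      _ ≤ (insert j S).inf a := inf_le_left
      _ ≤ a j := Finset.inf_le (Finset.mem_insert_self j S)
  have := key (S.inf a) (finStrong S hS) x hxb
  rwa [hmA] at this
end

section
/- Let A be an abelian group, H and H' subgroups of A, and Σ : H × H' → A the summation map (h, h') ↦ h + h'. Suppose Σ is surjective and its kernel has finite exponent m (i.e. m·k = 0 for all k ∈ ker Σ). Then the map η : A → A defined by η(Σ(h, h')) = m·h' is a well-defined group endomorphism of A, and its kernel equals H + H'[m], where H'[m] = {t ∈ H' : m·t = 0}. In particular H is a subgroup of ker η, and if H ∩ H' and H'[m] are finite then H has finite index in ker η. -/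
/-- Let `A` be an abelian group, `H`, `H'` subgroups, and suppose the summation map
`H × H' → A` is surjective with kernel of finite exponent `m`. Then
`η(h + h') := m • h'` is a well-defined endomorphism of `A`, its kernel is
`H + H'[m]`, `H ≤ ker η`, and if `H ∩ H'` and `H'[m]` are finite then `H` has
finite index in `ker η`. -/
theorem summation_complement_endomorphism {A : Type*} [AddCommGroup A]
    (H H' : AddSubgroup A) (m : ℕ+)
    (hsurj : ∀ a : A, ∃ h ∈ H, ∃ h' ∈ H', h + h' = a)
    (hker : ∀ h ∈ H, ∀ h' ∈ H', h + h' = 0 → (m : ℕ) • h = 0 ∧ (m : ℕ) • h' = 0) :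
    ∃ η : A →+ A,
      (∀ h ∈ H, ∀ h' ∈ H', η (h + h') = (m : ℕ) • h') ∧
      (∀ a : A, η a = 0 ↔ ∃ h ∈ H, ∃ t ∈ H', (m : ℕ) • t = 0 ∧ a = h + t) ∧
      (∀ h ∈ H, η h = 0) ∧
      (((H ⊓ H' : AddSubgroup A) : Set A).Finite →
        ({t : A | t ∈ H' ∧ (m : ℕ) • t = 0}).Finite →
        ∃ S : Set A, S.Finite ∧ ∀ a : A, η a = 0 → ∃ s ∈ S, a - s ∈ H) := by
  -- well-definedness
  have wd : ∀ h₁ ∈ H, ∀ h₁' ∈ H', ∀ h₂ ∈ H, ∀ h₂' ∈ H',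
      h₁ + h₁' = h₂ + h₂' → (m : ℕ) • h₁' = (m : ℕ) • h₂' := by
    intro h₁ hh₁ h₁' hh₁' h₂ hh₂ h₂' hh₂' heq
    have hz : (h₁ - h₂) + (h₁' - h₂') = 0 := by
      rw [sub_add_sub_comm, heq, sub_self]
    have := (hker _ (sub_mem hh₁ hh₂) _ (sub_mem hh₁' hh₂') hz).2
    rwa [smul_sub, sub_eq_zero] at this
  choose f hf g hg hfg using hsurj
  refine ⟨{ toFun := fun a => (m : ℕ) • g a
            map_zero' := ?_
            map_add' := ?_ }, ?_, ?_, ?_, ?_⟩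
  · have := wd (f 0) (hf 0) (g 0) (hg 0) 0 (zero_mem H) 0 (zero_mem H')
      (by rw [hfg 0, add_zero])
    simpa using this
  · intro a b
    have := wd (f (a + b)) (hf _) (g (a + b)) (hg _) (f a + f b)
      (add_mem (hf a) (hf b)) (g a + g b) (add_mem (hg a) (hg b))
      (by rw [hfg (a + b), add_add_add_comm, hfg a, hfg b])
    simpa [smul_add] using this
  · intro h hh h' hh'
    exact wd (f (h + h')) (hf _) (g (h + h')) (hg _) h hh h' hh' (hfg _)
  · intro a
    constructor
    · intro ha
      exact ⟨f a, hf a, g a, hg a, ha, (hfg a).symm⟩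
    · rintro ⟨h, hh, t, ht, hmt, rfl⟩
      have := wd (f (h + t)) (hf _) (g (h + t)) (hg _) h hh t ht (hfg _)
      show (m : ℕ) • g (h + t) = 0
      rw [this, hmt]
  · intro h hh
    have := wd (f h) (hf _) (g h) (hg _) h hh 0 (zero_mem H')
      (by rw [hfg h, add_zero])
    simpa using this
  · intro _ hfin
    refine ⟨_, hfin, ?_⟩
    intro a ha
    simp only [AddMonoidHom.coe_mk, ZeroHom.coe_mk] at ha
    refine ⟨g a, ⟨hg a, ha⟩, ?_⟩
    have : a - g a = f a := (eq_sub_of_add_eq (hfg a)).symm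
    rw [this]; exact hf a
end
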